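/- Let λ0 ∈ (−2,2), let g(t) = (1/2)( t² − (4 − λ0²)/4 − log(t² + λ0²/4) ) and x_± = ±√(4 − λ0²)/2. Then there exist C > 0 and N such that for every n ≥ N and every real t with t² + λ0²/4 > 0 satisfying |t − x_+| ≥ n^{−1/2} log n and |t − x_−| ≥ n^{−1/2} log n, one has g(t) ≥ C (log n)² / n. -/

import Mathlib

noncomputable section

/-- `g(t) = Re V(t, λ₀) = (1/2)( t² − (4 − λ₀²)/4 − log(t² + λ₀²/4) )`. -/
def gRe (l0 t : ℝ) : ℝ := (1 / 2) * (t ^ 2 - (4 - l0 ^ 2) / 4 - Real.log (t ^ 2 + l0 ^ 2 / 4))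

/-- The saddle point `x₊ = √(4 − λ₀²)/2`; the other saddle point is `x₋ = −x₊`. -/
def xPlus (l0 : ℝ) : ℝ := Real.sqrt (4 - l0 ^ 2) / 2

/-!
With `s = t² + λ₀²/4` one has `2 g(t) = s − 1 − log s` and `s − 1 = (t − x₊)(t + x₊)`.
Applying `log y ≤ y − 1` at `y = √s` gives `s − 1 − log s ≥ (√s − 1)² ≥ (s − 1)² / (2 (s + 1))`,
so `g(t) ≥ (t − x₊)² (t + x₊)² / (4 (s + 1))`. If both factors are at least `δ = n^{-1/2} log n`
in absolute value, the numerator is at least `δ² (t² + x₊²)`, and `(t² + x₊²)/(s + 1) ≥ x₊²/2`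
because `s + 1 = t² + 2 − x₊²` with `x₊² ≤ 1`. Hence `g(t) ≥ x₊² (log n)² / (8 n)`.
-/

open Real

theorem sq_sub_one_div_le_sub_one_sub_log {s : ℝ} (hs : 0 < s) :
    (s - 1) ^ 2 / (2 * (s + 1)) ≤ s - 1 - log s := by
  set r := √s
  have hr : r ^ 2 = s := sq_sqrt hs.le
  have hlog : log s ≤ 2 * (r - 1) := by
    have := log_le_sub_one_of_pos (sqrt_pos.2 hs)
    rw [log_sqrt hs.le] at this
    linarith
  have hleft : (r - 1) ^ 2 ≤ s - 1 - log s := by nlinarith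
  have hright : (r + 1) ^ 2 ≤ 2 * (s + 1) := by nlinarith [sq_nonneg (r - 1)]
  rw [div_le_iff₀ (by linarith)]
  calc (s - 1) ^ 2 = (r - 1) ^ 2 * (r + 1) ^ 2 := by rw [← hr]; ring
    _ ≤ (s - 1 - log s) * (2 * (s + 1)) :=
      mul_le_mul hleft hright (sq_nonneg _) ((sq_nonneg _).trans hleft)

theorem sq_mul_add_sq_le_sq_sub_mul_sq_add {δ a t : ℝ} (hδ : 0 ≤ δ)
    (h₁ : δ ≤ |t - a|) (h₂ : δ ≤ |t + a|) :
    δ ^ 2 * (t ^ 2 + a ^ 2) ≤ (t - a) ^ 2 * (t + a) ^ 2 := by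
  have hsub : δ ^ 2 ≤ (t - a) ^ 2 := by simpa only [sq_abs] using pow_le_pow_left₀ hδ h₁ 2
  have hadd : δ ^ 2 ≤ (t + a) ^ 2 := by simpa only [sq_abs] using pow_le_pow_left₀ hδ h₂ 2
  rcases le_total ((t - a) ^ 2) ((t + a) ^ 2) with h | h
  · nlinarith [mul_le_mul_of_nonneg_right hsub (sq_nonneg (t + a))]
  · nlinarith [mul_le_mul_of_nonneg_right hadd (sq_nonneg (t - a))]

section

variable {l0 : ℝ}

theorem xPlus_sq (hl0 : l0 ^ 2 ≤ 4) : xPlus l0 ^ 2 = 1 - l0 ^ 2 / 4 := by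
  rw [xPlus, div_pow, sq_sqrt (by linarith)]
  ring

theorem xPlus_pos (hl0 : l0 ^ 2 < 4) : 0 < xPlus l0 :=
  div_pos (sqrt_pos.2 (by linarith)) two_pos

theorem sq_sub_xPlus_mul_sq_add_xPlus_div_le_gRe {t : ℝ} (hl0 : l0 ^ 2 ≤ 4)
    (ht : 0 < t ^ 2 + l0 ^ 2 / 4) :
    (t - xPlus l0) ^ 2 * (t + xPlus l0) ^ 2 / (4 * (t ^ 2 + l0 ^ 2 / 4 + 1)) ≤ gRe l0 t := by
  have hfac : t ^ 2 + l0 ^ 2 / 4 - 1 = (t - xPlus l0) * (t + xPlus l0) := by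
    linear_combination xPlus_sq hl0
  calc _ = (t ^ 2 + l0 ^ 2 / 4 - 1) ^ 2 / (2 * (t ^ 2 + l0 ^ 2 / 4 + 1)) / 2 := by
        rw [hfac]; field_simp; ring
    _ ≤ (t ^ 2 + l0 ^ 2 / 4 - 1 - log (t ^ 2 + l0 ^ 2 / 4)) / 2 := by
        gcongr; exact sq_sub_one_div_le_sub_one_sub_log ht
    _ = gRe l0 t := by unfold gRe; ring

theorem xPlus_sq_div_eight_mul_sq_le_gRe {t δ : ℝ} (hl0 : l0 ^ 2 ≤ 4)
    (ht : 0 < t ^ 2 + l0 ^ 2 / 4) (hδ : 0 ≤ δ)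
    (h₁ : δ ≤ |t - xPlus l0|) (h₂ : δ ≤ |t + xPlus l0|) :
    xPlus l0 ^ 2 / 8 * δ ^ 2 ≤ gRe l0 t := by
  set a := xPlus l0
  have ha : a ^ 2 = 1 - l0 ^ 2 / 4 := xPlus_sq hl0
  have ha1 : a ^ 2 ≤ 1 := by nlinarith
  have hs : t ^ 2 + l0 ^ 2 / 4 + 1 = t ^ 2 + 2 - a ^ 2 := by linarith
  calc a ^ 2 / 8 * δ ^ 2 ≤ δ ^ 2 * (t ^ 2 + a ^ 2) / (4 * (t ^ 2 + l0 ^ 2 / 4 + 1)) := by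
        rw [le_div_iff₀ (by positivity), hs]
        nlinarith [mul_nonneg (sq_nonneg δ) (mul_nonneg (sq_nonneg t) (by linarith : 0 ≤ 2 - a ^ 2)),
          mul_nonneg (sq_nonneg δ) (sq_nonneg (a ^ 2))]
    _ ≤ (t - a) ^ 2 * (t + a) ^ 2 / (4 * (t ^ 2 + l0 ^ 2 / 4 + 1)) := by
        gcongr ?_ / _; exact sq_mul_add_sq_le_sq_sub_mul_sq_add hδ h₁ h₂
    _ ≤ gRe l0 t := sq_sub_xPlus_mul_sq_add_xPlus_div_le_gRe hl0 ht

end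

/-- Away from the `n^{-1/2} log n`-neighbourhoods of the saddle points,
`Re V(t, λ₀) ≥ C (log n)²/n` for large `n`. -/
theorem gRe_lower_bound_away_from_saddle (l0 : ℝ) (hl0 : l0 ∈ Set.Ioo (-2 : ℝ) 2) :
    ∃ C : ℝ, 0 < C ∧ ∃ N : ℕ, ∀ n : ℕ, N ≤ n →
      ∀ t : ℝ, 0 < t ^ 2 + l0 ^ 2 / 4 →
        Real.log n / Real.sqrt n ≤ |t - xPlus l0| →
        Real.log n / Real.sqrt n ≤ |t - (-xPlus l0)| →
        C * (Real.log n) ^ 2 / n ≤ gRe l0 t := by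
  have hl0sq : l0 ^ 2 < 4 := by nlinarith [hl0.1, hl0.2]
  have hC : 0 < xPlus l0 ^ 2 / 8 := by have := xPlus_pos hl0sq; positivity
  refine ⟨xPlus l0 ^ 2 / 8, hC, 0, fun n _ t ht h₁ h₂ => ?_⟩
  rw [sub_neg_eq_add] at h₂
  have hδ : 0 ≤ log n / √n := div_nonneg (log_natCast_nonneg n) (sqrt_nonneg _)
  calc xPlus l0 ^ 2 / 8 * log n ^ 2 / n = xPlus l0 ^ 2 / 8 * (log n / √n) ^ 2 := by
        rw [div_pow, sq_sqrt n.cast_nonneg]; ring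
    _ ≤ gRe l0 t := xPlus_sq_div_eight_mul_sq_le_gRe hl0sq.le ht hδ h₁ h₂

end
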